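/- arXiv:2602.22233 — 5 statements merged into one kernel-verified Lean document; each statement's English description precedes it below -/
import Mathlib

section
/- Let K be an algebraically closed field of characteristic zero, let f₁,…,f_l ∈ K⟨x₁,…,x_d⟩ be homogeneous noncommutative polynomials and let g ∈ K⟨x₁,…,x_d⟩. Then the following are equivalent: (i) for every n ∈ ℕ and every tuple X = (X₁,…,X_d) of n×n matrices over K, every subspace of Kⁿ that is invariant under each of f₁(X),…,f_l(X) is also invariant under g(X); (ii) g belongs to the unital K-subalgebra of K⟨x₁,…,x_d⟩ generated by f₁,…,f_l. -/
open FreeAlgebra Submodule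

namespace Stmt0Aux

variable {K : Type*} [Field K] {d : ℕ}

theorem basis_word (K : Type*) [Field K] (d : ℕ) (L : FreeMonoid (Fin d)) :
    basisFreeMonoid K (Fin d) L = (L.toList.map (ι K)).prod := by
  have key : equivMonoidAlgebraFreeMonoid (R := K) (X := Fin d) ((L.toList.map (ι K)).prod)
      = MonoidAlgebra.of K (FreeMonoid (Fin d)) L := by
    induction L using FreeMonoid.recOn with
    | one => simpa using MonoidAlgebra.one_def
    | of_mul x y ih =>
        rw [show FreeMonoid.toList (FreeMonoid.of x * y) = x :: FreeMonoid.toList y from rfl,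
          List.map_cons, List.prod_cons, map_mul, ih, map_mul]
        congr 1
        simp [equivMonoidAlgebraFreeMonoid]
  rw [basisFreeMonoid, Module.Basis.map_apply, LinearEquiv.trans_symm, LinearEquiv.trans_apply]
  rw [show (MonoidAlgebra.coeffLinearEquiv K).symm
      ((Finsupp.basisSingleOne (R := K) (ι := FreeMonoid (Fin d))) L)
      = MonoidAlgebra.of K (FreeMonoid (Fin d)) L from by
    simp [Finsupp.basisSingleOne, MonoidAlgebra.of_apply]]
  rw [← key]
  exact AlgEquiv.symm_apply_apply (equivMonoidAlgebraFreeMonoid (R := K) (X := Fin d)) _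

theorem word_eq_basis (L : List (Fin d)) :
    (L.map (ι K)).prod = basisFreeMonoid K (Fin d) (FreeMonoid.ofList L) := by
  rw [basis_word]; rfl

/-- membership in the span of a set of words constrains the basis support. -/
theorem repr_support_subset {P : List (Fin d) → Prop} {x : FreeAlgebra K (Fin d)}
    (hx : x ∈ Submodule.span K
      {w : FreeAlgebra K (Fin d) | ∃ L : List (Fin d), P L ∧ w = (L.map (ι K)).prod}) :
    ∀ M ∈ ((basisFreeMonoid K (Fin d)).repr x).support, P M.toList := by
  set b := basisFreeMonoid K (Fin d)
  have : Submodule.span K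
      {w : FreeAlgebra K (Fin d) | ∃ L : List (Fin d), P L ∧ w = (L.map (ι K)).prod}
      ≤ Submodule.comap (b.repr.toLinearMap)
        (Finsupp.supported K K {M : FreeMonoid (Fin d) | P M.toList}) := by
    rw [Submodule.span_le]
    rintro w ⟨L, hPL, rfl⟩
    refine Submodule.mem_comap.mpr ?_
    show b.repr ((L.map (ι K)).prod) ∈ _
    rw [word_eq_basis, Module.Basis.repr_self, Finsupp.mem_supported]
    intro M hM
    have := Finsupp.support_single_subset hM
    simp only [Finset.mem_singleton] at this
    subst this
    exact hPL
  have hx' := this hx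
  simp only [Submodule.mem_comap, LinearEquiv.coe_toLinearMap, Finsupp.mem_supported] at hx'
  exact fun M hM => hx' hM

/-- truncation at degree `N`. -/
noncomputable def trunc (N : ℕ) (x : FreeAlgebra K (Fin d)) : FreeAlgebra K (Fin d) :=
  (basisFreeMonoid K (Fin d)).repr.symm
    (((basisFreeMonoid K (Fin d)).repr x).filter (fun M => M.toList.length ≤ N))

theorem trunc_add (N : ℕ) (x y : FreeAlgebra K (Fin d)) :
    trunc N (x + y) = trunc N x + trunc N y := by
  simp [trunc, Finsupp.filter_add]

theorem trunc_smul (N : ℕ) (c : K) (x : FreeAlgebra K (Fin d)) :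
    trunc N (c • x) = c • trunc N x := by
  rw [trunc, trunc, map_smul, Finsupp.filter_smul, map_smul]

theorem trunc_zero (N : ℕ) : trunc N (0 : FreeAlgebra K (Fin d)) = 0 := by
  simp [trunc, Finsupp.filter_zero]

theorem trunc_eq_self {N : ℕ} {x : FreeAlgebra K (Fin d)}
    (h : ∀ M ∈ ((basisFreeMonoid K (Fin d)).repr x).support, M.toList.length ≤ N) :
    trunc N x = x := by
  have hfil : (((basisFreeMonoid K (Fin d)).repr x).filter
      (fun M : FreeMonoid (Fin d) => M.toList.length ≤ N)) = (basisFreeMonoid K (Fin d)).repr x :=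
    (Finsupp.filter_eq_self_iff _ _).mpr fun M hM => h M (Finsupp.mem_support_iff.mpr hM)
  rw [trunc, hfil]
  exact LinearEquiv.symm_apply_apply _ _

theorem trunc_eq_zero {N : ℕ} {x : FreeAlgebra K (Fin d)}
    (h : ∀ M ∈ ((basisFreeMonoid K (Fin d)).repr x).support, N < M.toList.length) :
    trunc N x = 0 := by
  have hfil : (((basisFreeMonoid K (Fin d)).repr x).filter
      (fun M : FreeMonoid (Fin d) => M.toList.length ≤ N)) = 0 :=
    (Finsupp.filter_eq_zero_iff _ _).mpr fun M hM => by
      by_contra hne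
      exact absurd (h M (Finsupp.mem_support_iff.mpr hne)) (by omega)
  rw [trunc, hfil, map_zero]

theorem span_words_top :
    Submodule.span K {w : FreeAlgebra K (Fin d) | ∃ L : List (Fin d), w = (L.map (ι K)).prod}
      = ⊤ := by
  rw [eq_top_iff, ← (basisFreeMonoid K (Fin d)).span_eq]
  refine Submodule.span_mono ?_
  rintro _ ⟨M, rfl⟩
  exact ⟨M.toList, (basis_word K d M).symm ▸ rfl⟩

theorem homog_mul {k m : ℕ} {x y : FreeAlgebra K (Fin d)}
    (hx : x ∈ Submodule.span K
      {w : FreeAlgebra K (Fin d) | ∃ L : List (Fin d), L.length = k ∧ w = (L.map (ι K)).prod})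
    (hy : y ∈ Submodule.span K
      {w : FreeAlgebra K (Fin d) | ∃ L : List (Fin d), L.length = m ∧ w = (L.map (ι K)).prod}) :
    x * y ∈ Submodule.span K
      {w : FreeAlgebra K (Fin d) | ∃ L : List (Fin d), L.length = k + m ∧
        w = (L.map (ι K)).prod} := by
  induction hx using Submodule.span_induction with
  | mem w hw =>
      obtain ⟨L, hL, rfl⟩ := hw
      induction hy using Submodule.span_induction with
      | mem w' hw' =>
          obtain ⟨L', hL', rfl⟩ := hw'
          refine Submodule.subset_span ⟨L ++ L', by simp [hL, hL'], ?_⟩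
          rw [List.map_append, List.prod_append]
      | zero => simp
      | add a b _ _ ha hb => rw [mul_add]; exact Submodule.add_mem _ ha hb
      | smul c a _ ha => rw [mul_smul_comm]; exact Submodule.smul_mem _ _ ha
  | zero => simp
  | add a b _ _ ha hb => rw [add_mul]; exact Submodule.add_mem _ ha hb
  | smul c a _ ha => rw [smul_mul_assoc]; exact Submodule.smul_mem _ _ ha

/-- the span of long words. -/
noncomputable def SN (K : Type*) [Field K] (d N : ℕ) : Submodule K (FreeAlgebra K (Fin d)) :=
  Submodule.span K
    {w : FreeAlgebra K (Fin d) | ∃ L : List (Fin d), N < L.length ∧ w = (L.map (ι K)).prod}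

theorem mul_mem_SN (N : ℕ) (a : FreeAlgebra K (Fin d)) :
    ∀ s ∈ SN K d N, a * s ∈ SN K d N := by
  intro s hs
  induction hs using Submodule.span_induction with
  | mem w hw =>
      obtain ⟨L, hL, rfl⟩ := hw
      have ha : a ∈ Submodule.span K
          {w : FreeAlgebra K (Fin d) | ∃ L : List (Fin d), w = (L.map (ι K)).prod} := by
        rw [span_words_top]; trivial
      induction ha using Submodule.span_induction with
      | mem w' hw' =>
          obtain ⟨L', rfl⟩ := hw'
          refine Submodule.subset_span ⟨L' ++ L, by simp; omega, ?_⟩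
          rw [List.map_append, List.prod_append]
      | zero => simp [SN]
      | add p q _ _ hp hq => rw [add_mul]; exact Submodule.add_mem _ hp hq
      | smul c p _ hp => rw [smul_mul_assoc]; exact Submodule.smul_mem _ _ hp
  | zero => rw [mul_zero]; exact Submodule.zero_mem _
  | add p q _ _ hp hq => rw [mul_add]; exact Submodule.add_mem _ hp hq
  | smul c p _ hp => rw [mul_smul_comm]; exact Submodule.smul_mem _ _ hp

/-- left multiplication on the quotient by long words. -/
noncomputable def phi (K : Type*) [Field K] (d N : ℕ) :
    FreeAlgebra K (Fin d) →ₐ[K] Module.End K (FreeAlgebra K (Fin d) ⧸ SN K d N) :=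
  FreeAlgebra.lift K (fun i => Submodule.mapQ (SN K d N) (SN K d N)
    (Algebra.lmul K (FreeAlgebra K (Fin d)) (ι K i))
    (fun s hs => Submodule.mem_comap.mpr (mul_mem_SN N (ι K i) s hs)))

theorem phi_mk (N : ℕ) (a : FreeAlgebra K (Fin d)) : ∀ x : FreeAlgebra K (Fin d),
    phi K d N a (Submodule.Quotient.mk x) = Submodule.Quotient.mk (a * x) := by
  induction a with
  | grade0 r =>
      intro x
      rw [AlgHom.commutes, Module.algebraMap_end_apply, ← Submodule.Quotient.mk_smul,
        Algebra.smul_def]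
  | grade1 i =>
      intro x
      rw [phi, FreeAlgebra.lift_ι_apply, Submodule.mapQ_apply]
      rfl
  | mul a b ha hb =>
      intro x
      rw [map_mul, Module.End.mul_apply, hb x, ha (b * x), mul_assoc]
  | add a b ha hb =>
      intro x
      rw [map_add, LinearMap.add_apply, ha x, hb x, ← Submodule.Quotient.mk_add, add_mul]

theorem finite_quot (K : Type*) [Field K] (d N : ℕ) :
    Module.Finite K (FreeAlgebra K (Fin d) ⧸ SN K d N) := by
  set short : Set (FreeAlgebra K (Fin d)) :=
    {w : FreeAlgebra K (Fin d) | ∃ L : List (Fin d), L.length ≤ N ∧ w = (L.map (ι K)).prod}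
  have hfin : ((SN K d N).mkQ '' short).Finite := by
    refine Set.Finite.image _ (Set.Finite.subset
      (Set.Finite.image (fun L : List (Fin d) => (L.map (ι K)).prod) (List.finite_length_le (Fin d) N)) ?_)
    rintro w ⟨L, hL, rfl⟩
    exact ⟨L, hL, rfl⟩
  have hspan : Submodule.span K ((SN K d N).mkQ '' short) = ⊤ := by
    rw [eq_top_iff]
    rintro q -
    obtain ⟨x, rfl⟩ := Submodule.mkQ_surjective (SN K d N) q
    have hx : x ∈ Submodule.span K
        {w : FreeAlgebra K (Fin d) | ∃ L : List (Fin d), w = (L.map (ι K)).prod} := by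
      rw [span_words_top]; trivial
    have hmem : (SN K d N).mkQ x ∈ Submodule.map (SN K d N).mkQ (Submodule.span K
        {w : FreeAlgebra K (Fin d) | ∃ L : List (Fin d), w = (L.map (ι K)).prod}) :=
      ⟨x, hx, rfl⟩
    rw [Submodule.map_span] at hmem
    refine Submodule.span_le.mpr ?_ hmem
    rintro _ ⟨w, ⟨L, rfl⟩, rfl⟩
    rcases le_or_gt L.length N with h | h
    · exact Submodule.subset_span ⟨(L.map (ι K)).prod, ⟨L, h, rfl⟩, rfl⟩
    · have : (L.map (ι K)).prod ∈ SN K d N := Submodule.subset_span ⟨L, h, rfl⟩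
      rw [show (SN K d N).mkQ ((L.map (ι K)).prod) = 0 from
        (Submodule.Quotient.mk_eq_zero _).mpr this]
      exact Submodule.zero_mem _
  exact ⟨Submodule.fg_def.mpr ⟨_, hfin, hspan⟩⟩

theorem trunc_adjoin {l : ℕ} {f : Fin l → FreeAlgebra K (Fin d)}
    (hf : ∀ j, ∃ k : ℕ, f j ∈ Submodule.span K
      {w : FreeAlgebra K (Fin d) |
        ∃ L : List (Fin d), L.length = k ∧ w = (L.map (ι K)).prod})
    (N : ℕ) {a : FreeAlgebra K (Fin d)}
    (ha : a ∈ Subalgebra.toSubmodule (Algebra.adjoin K (Set.range f))) :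
    trunc N a ∈ Subalgebra.toSubmodule (Algebra.adjoin K (Set.range f)) := by
  rw [Algebra.adjoin_eq_span] at ha ⊢
  induction ha using Submodule.span_induction with
  | mem x hx =>
      have hhom : ∃ k : ℕ, x ∈ Submodule.span K
          {w : FreeAlgebra K (Fin d) |
            ∃ L : List (Fin d), L.length = k ∧ w = (L.map (ι K)).prod} := by
        induction hx using Submonoid.closure_induction with
        | mem y hy => obtain ⟨j, rfl⟩ := hy; exact hf j
        | one => exact ⟨0, Submodule.subset_span ⟨[], rfl, by simp⟩⟩
        | mul y z hy hz ihy ihz =>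
            obtain ⟨k, hk⟩ := ihy; obtain ⟨m, hm⟩ := ihz
            exact ⟨k + m, homog_mul hk hm⟩
      obtain ⟨k, hk⟩ := hhom
      rcases le_or_gt k N with h | h
      · rw [trunc_eq_self (fun M hM => by
          have := repr_support_subset hk M hM; omega)]
        exact Submodule.subset_span hx
      · rw [trunc_eq_zero (fun M hM => by
          have := repr_support_subset hk M hM; omega)]
        exact Submodule.zero_mem _
  | zero => rw [trunc_zero]; exact Submodule.zero_mem _
  | add p q hp hq ihp ihq => rw [trunc_add]; exact Submodule.add_mem _ ihp ihq
  | smul c p hp ihp => rw [trunc_smul]; exact Submodule.smul_mem _ _ ihp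

end Stmt0Aux

/-- Homogeneous Nullstellensatz for joint invariant subspaces. -/
theorem stmt0 (K : Type*) [Field K] [IsAlgClosed K] [CharZero K]
    (d l : ℕ) (f : Fin l → FreeAlgebra K (Fin d)) (g : FreeAlgebra K (Fin d))
    (hf : ∀ j, ∃ k : ℕ, f j ∈ Submodule.span K
      {w : FreeAlgebra K (Fin d) |
        ∃ L : List (Fin d), L.length = k ∧ w = (L.map (FreeAlgebra.ι K)).prod}) :
    (∀ (n : ℕ) (X : Fin d → Matrix (Fin n) (Fin n) K) (W : Submodule K (Fin n → K)),
        (∀ j, ∀ w ∈ W, (FreeAlgebra.lift K X (f j)).mulVec w ∈ W) →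
        ∀ w ∈ W, (FreeAlgebra.lift K X g).mulVec w ∈ W)
      ↔ g ∈ Algebra.adjoin K (Set.range f) := by
  classical
  constructor
  · intro hinv
    set N := (((basisFreeMonoid K (Fin d)).repr g).support.sup
      (fun M : FreeMonoid (Fin d) => M.toList.length)) with hNdef
    haveI : Module.Finite K (FreeAlgebra K (Fin d) ⧸ Stmt0Aux.SN K d N) :=
      Stmt0Aux.finite_quot K d N
    set V := FreeAlgebra K (Fin d) ⧸ Stmt0Aux.SN K d N with hV
    set n := Module.finrank K V with hn
    set bV := Module.finBasis K V with hbV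
    set X : Fin d → Matrix (Fin n) (Fin n) K :=
      fun i => LinearMap.toMatrix bV bV (Stmt0Aux.phi K d N (FreeAlgebra.ι K i)) with hX
    have hlift : ∀ p : FreeAlgebra K (Fin d),
        FreeAlgebra.lift K X p = LinearMap.toMatrix bV bV (Stmt0Aux.phi K d N p) := by
      have : FreeAlgebra.lift K X
          = ((LinearMap.toMatrixAlgEquiv bV).toAlgHom.comp (Stmt0Aux.phi K d N)) := by
        apply FreeAlgebra.hom_ext
        funext i
        show FreeAlgebra.lift K X (FreeAlgebra.ι K i) = _
        rw [FreeAlgebra.lift_ι_apply]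
        rfl
      intro p
      rw [this]
      rfl
    have hbridge : ∀ (E : Module.End K V) (v : V),
        (LinearMap.toMatrix bV bV E).mulVec (bV.equivFun v) = bV.equivFun (E v) := by
      intro E v
      rw [Module.Basis.equivFun_apply, Module.Basis.equivFun_apply]
      exact LinearMap.toMatrix_mulVec_repr bV bV E v
    set A' := Subalgebra.toSubmodule (Algebra.adjoin K (Set.range f)) with hA'
    set W := Submodule.map (bV.equivFun.toLinearMap)
      (Submodule.map (Stmt0Aux.SN K d N).mkQ A') with hW
    have hWmem : ∀ a ∈ A', bV.equivFun (Submodule.Quotient.mk a) ∈ W :=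
      fun a ha => ⟨_, ⟨a, ha, rfl⟩, rfl⟩
    have hinv' : ∀ j, ∀ w ∈ W, (FreeAlgebra.lift K X (f j)).mulVec w ∈ W := by
      rintro j w ⟨v, ⟨a, ha, rfl⟩, rfl⟩
      show (FreeAlgebra.lift K X (f j)).mulVec (bV.equivFun ((Stmt0Aux.SN K d N).mkQ a)) ∈ W
      rw [hlift, Submodule.mkQ_apply, hbridge, Stmt0Aux.phi_mk]
      refine hWmem _ ?_
      exact (Subalgebra.mem_toSubmodule _).mpr
        (mul_mem (Algebra.subset_adjoin ⟨j, rfl⟩) ((Subalgebra.mem_toSubmodule _).mp ha))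
    have h1 : bV.equivFun (Submodule.Quotient.mk 1) ∈ W := hWmem 1 ((Subalgebra.mem_toSubmodule _).mpr (one_mem _))
    have hgoal := hinv n X W hinv' _ h1
    rw [hlift, hbridge, Stmt0Aux.phi_mk, mul_one] at hgoal
    obtain ⟨v, hv, hveq⟩ := hgoal
    obtain ⟨a, ha, hamk⟩ := hv
    have hveq' : v = Submodule.Quotient.mk g := bV.equivFun.injective hveq
    have hsub : a - g ∈ Stmt0Aux.SN K d N := by
      rw [← Submodule.Quotient.eq]
      rw [← Submodule.mkQ_apply, hamk, hveq']
    have htruncg : Stmt0Aux.trunc N g = g :=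
      Stmt0Aux.trunc_eq_self (fun M hM => Finset.le_sup hM)
    have htruncsub : Stmt0Aux.trunc N (a - g) = 0 := by
      refine Stmt0Aux.trunc_eq_zero (fun M hM => ?_)
      exact Stmt0Aux.repr_support_subset (P := fun L => N < L.length) hsub M hM
    have hga : g = a + (-(a - g)) := by abel
    have : Stmt0Aux.trunc N g ∈ A' := by
      rw [hga, Stmt0Aux.trunc_add]
      refine Submodule.add_mem _ (Stmt0Aux.trunc_adjoin hf N ha) ?_
      rw [show -(a - g) = (-1 : K) • (a - g) from by simp, Stmt0Aux.trunc_smul, htruncsub,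
        smul_zero]
      exact Submodule.zero_mem _
    rw [htruncg] at this
    exact this
  · intro hg n X W hW
    induction hg using Algebra.adjoin_induction with
    | mem x hx =>
        obtain ⟨j, rfl⟩ := hx
        exact hW j
    | algebraMap r =>
        intro w hw
        rw [AlgHom.commutes]
        rw [show (algebraMap K (Matrix (Fin n) (Fin n) K)) r = r • (1 : Matrix (Fin n) (Fin n) K)
          from Algebra.algebraMap_eq_smul_one r]
        rw [Matrix.smul_mulVec, Matrix.one_mulVec]
        exact Submodule.smul_mem _ _ hw
    | add x y hx hy ihx ihy =>
        intro w hw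
        rw [map_add, Matrix.add_mulVec]
        exact Submodule.add_mem _ (ihx w hw) (ihy w hw)
    | mul x y hx hy ihx ihy =>
        intro w hw
        rw [map_mul, ← Matrix.mulVec_mulVec]
        exact ihx _ (ihy w hw)
end

section
/- There exist integers d ≥ 1 and l ≥ 2 and noncommutative polynomials f₁,…,f_l, g ∈ ℂ⟨x₁,…,x_d⟩ such that: (a) for every n ∈ ℕ and every tuple X = (X₁,…,X_d) of n×n complex matrices, every subspace of ℂⁿ that is invariant under each of f₁(X),…,f_l(X) is also invariant under g(X); and (b) g does not belong to the unital ℂ-subalgebra of ℂ⟨x₁,…,x_d⟩ generated by f₁,…,f_l. -/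
noncomputable section
namespace Stmt2Aux

abbrev F2 := FreeAlgebra ℂ (Fin 2)

def gx : F2 := FreeAlgebra.ι ℂ 0
def gy : F2 := FreeAlgebra.ι ℂ 1
def gc : F2 := gx * gy - gy * gx - 1

def ff : Fin 13 → F2 := fun j =>
  match j with
  | ⟨0, _⟩ => gx * gx
  | ⟨1, _⟩ => gx * gy
  | ⟨2, _⟩ => gy * gx
  | ⟨3, _⟩ => gy * gy
  | ⟨4, _⟩ => gc
  | ⟨5, _⟩ => gx * gc
  | ⟨6, _⟩ => gc * gx
  | ⟨7, _⟩ => gy * gc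
  | ⟨8, _⟩ => gc * gy
  | ⟨9, _⟩ => gx * gc * gx
  | ⟨10, _⟩ => gx * gc * gy
  | ⟨11, _⟩ => gy * gc * gx
  | ⟨12, _⟩ => gy * gc * gy

example : ff 7 = gy * gc := rfl

lemma anticomm_mul {R : Type*} [Ring R] {σ a b : R}
    (ha : a * σ = -(σ * a)) (hb : b * σ = -(σ * b)) : σ * (a * b) = (a * b) * σ := by
  have ha' : σ * a = -(a * σ) := by rw [ha, neg_neg]
  have hb' : σ * b = -(b * σ) := by rw [hb, neg_neg]
  calc σ * (a * b) = (σ * a) * b := (mul_assoc _ _ _).symm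
  _ = (-(a * σ)) * b := by rw [ha']
  _ = -(a * (σ * b)) := by rw [neg_mul, mul_assoc]
  _ = -(a * (-(b * σ))) := by rw [hb']
  _ = (a * b) * σ := by rw [mul_neg, neg_neg, mul_assoc]

open Polynomial in
lemma gx_not_mem : gx ∉ Algebra.adjoin ℂ (Set.range ff) := by
  intro hmem
  set D : Module.End ℂ (Polynomial ℂ) := Polynomial.derivative with hD
  set T : Module.End ℂ (Polynomial ℂ) := LinearMap.mulLeft ℂ (Polynomial.X : ℂ[X]) with hT
  set σ : Module.End ℂ (Polynomial ℂ) :=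
    (Polynomial.aeval (R := ℂ) (-(Polynomial.X : ℂ[X]))).toLinearMap with hσ
  set ψ : F2 →ₐ[ℂ] Module.End ℂ (Polynomial ℂ) :=
    FreeAlgebra.lift ℂ (![D, T] : Fin 2 → Module.End ℂ (Polynomial ℂ)) with hψ
  have hψx : ψ gx = D := by simp [hψ, gx]
  have hψy : ψ gy = T := by simp [hψ, gy]
  have hDσ : D * σ = -(σ * D) := by
    apply LinearMap.ext; intro p
    have : (Polynomial.aeval (R := ℂ) (-(Polynomial.X : ℂ[X]))) p = p.comp (-X) :=
      (Polynomial.comp_eq_aeval).symm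
    simp only [Module.End.mul_apply, LinearMap.neg_apply, hσ, hD, AlgHom.toLinearMap_apply]
    rw [← Polynomial.comp_eq_aeval, ← Polynomial.comp_eq_aeval, Polynomial.derivative_comp]
    simp
  have hTσ : T * σ = -(σ * T) := by
    apply LinearMap.ext; intro p
    simp only [Module.End.mul_apply, LinearMap.neg_apply, hσ, hT, AlgHom.toLinearMap_apply,
      LinearMap.mulLeft_apply, map_mul, Polynomial.aeval_X, neg_mul, neg_neg]
  have hψc : ψ gc = 0 := by
    have h1 : D * T - T * D = 1 := by
      apply LinearMap.ext; intro p
      simp [hD, hT, Polynomial.derivative_mul]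
    simp [gc, map_sub, map_mul, map_one, hψx, hψy, h1]
  -- all generators commute with σ
  have hcomm2 : ∀ a b : Module.End ℂ (Polynomial ℂ), a * σ = -(σ * a) → b * σ = -(σ * b) →
      σ * (a * b) = (a * b) * σ := fun a b ha hb => anticomm_mul ha hb
  have hgen : ∀ j, ψ (ff j) ∈ Subalgebra.centralizer ℂ ({σ} : Set (Module.End ℂ (Polynomial ℂ))) := by
    intro j
    have hz : ∀ u : F2, ψ (u * gc) ∈ Subalgebra.centralizer ℂ ({σ} : Set _) := by
      intro u; rw [map_mul, hψc, mul_zero]; exact Subalgebra.zero_mem _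
    have hz' : ∀ u v : F2, ψ (u * gc * v) ∈ Subalgebra.centralizer ℂ ({σ} : Set _) := by
      intro u v; rw [map_mul, map_mul, hψc, mul_zero, zero_mul]; exact Subalgebra.zero_mem _
    have hmem2 : ∀ a b : Module.End ℂ (Polynomial ℂ), a * σ = -(σ * a) → b * σ = -(σ * b) →
        (a * b) ∈ Subalgebra.centralizer ℂ ({σ} : Set _) := by
      intro a b ha hb
      rw [Subalgebra.mem_centralizer_iff]
      rintro g rfl
      exact hcomm2 a b ha hb
    fin_cases j
    · show ψ (gx * gx) ∈ _
      rw [map_mul, hψx]; exact hmem2 D D hDσ hDσ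
    · show ψ (gx * gy) ∈ _
      rw [map_mul, hψx, hψy]; exact hmem2 D T hDσ hTσ
    · show ψ (gy * gx) ∈ _
      rw [map_mul, hψy, hψx]; exact hmem2 T D hTσ hDσ
    · show ψ (gy * gy) ∈ _
      rw [map_mul, hψy]; exact hmem2 T T hTσ hTσ
    · show ψ gc ∈ _
      rw [hψc]; exact Subalgebra.zero_mem _
    · show ψ (gx * gc) ∈ _
      exact hz gx
    · show ψ (gc * gx) ∈ _
      rw [map_mul, hψc, zero_mul]; exact Subalgebra.zero_mem _
    · show ψ (gy * gc) ∈ _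
      exact hz gy
    · show ψ (gc * gy) ∈ _
      rw [map_mul, hψc, zero_mul]; exact Subalgebra.zero_mem _
    · show ψ (gx * gc * gx) ∈ _
      exact hz' gx gx
    · show ψ (gx * gc * gy) ∈ _
      exact hz' gx gy
    · show ψ (gy * gc * gx) ∈ _
      exact hz' gy gx
    · show ψ (gy * gc * gy) ∈ _
      exact hz' gy gy
  have hDmem : D ∈ Subalgebra.centralizer ℂ ({σ} : Set (Module.End ℂ (Polynomial ℂ))) := by
    have : ψ gx ∈ (Algebra.adjoin ℂ (Set.range ff)).map ψ := ⟨gx, hmem, rfl⟩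
    rw [AlgHom.map_adjoin] at this
    have hle : Algebra.adjoin ℂ (ψ '' Set.range ff) ≤
        Subalgebra.centralizer ℂ ({σ} : Set (Module.End ℂ (Polynomial ℂ))) := by
      apply Algebra.adjoin_le
      rintro _ ⟨_, ⟨j, rfl⟩, rfl⟩
      exact hgen j
    rw [hψx] at this
    exact hle this
  rw [Subalgebra.mem_centralizer_iff] at hDmem
  have h := hDmem σ rfl
  have h2 := congrArg (fun (e : Module.End ℂ (Polynomial ℂ)) => e (Polynomial.X : ℂ[X])) h
  simp only [Module.End.mul_apply, hσ, hD, AlgHom.toLinearMap_apply, Polynomial.aeval_X,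
    Polynomial.derivative_X, map_one, Polynomial.derivative_neg] at h2
  -- h2 : σ (derivative X) = derivative (aeval (-X) X)  →  1 = -1
  have := congrArg (fun p => Polynomial.eval (0 : ℂ) p) h2
  norm_num at this


lemma key {V : Type} [AddCommGroup V] [Module ℂ V] [FiniteDimensional ℂ V]
    (π : F2 →ₐ[ℂ] Module.End ℂ V) (W : Submodule ℂ V)
    (h : ∀ j, ∀ w ∈ W, π (ff j) w ∈ W) :
    ∀ w ∈ W, π gx w ∈ W := by
  classical
  set Pg : Fin 2 → Module.End ℂ V := fun i => π (FreeAlgebra.ι ℂ i) with hPg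
  set C : Module.End ℂ V := π gc with hC
  set wp : List (Fin 2) → Module.End ℂ V := fun l => (l.map Pg).prod with hwp
  have hwp_nil : wp [] = 1 := by simp [hwp]
  have hwp_cons : ∀ a l, wp (a :: l) = Pg a * wp l := by intro a l; simp [hwp]
  have hwp_append : ∀ l1 l2, wp (l1 ++ l2) = wp l1 * wp l2 := by
    intro l1 l2; simp [hwp]
  have hwp_single : ∀ a, wp [a] = Pg a := by intro a; simp [hwp]
  -- invariance under the two-letter words
  have hpair : ∀ a b : Fin 2, ∀ w ∈ W, (Pg a * Pg b) w ∈ W := by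
    intro a b w hw
    fin_cases a <;> fin_cases b
    · have := h 0 w hw; rwa [show ff 0 = gx * gx from rfl, map_mul] at this
    · have := h 1 w hw; rwa [show ff 1 = gx * gy from rfl, map_mul] at this
    · have := h 2 w hw; rwa [show ff 2 = gy * gx from rfl, map_mul] at this
    · have := h 3 w hw; rwa [show ff 3 = gy * gy from rfl, map_mul] at this
  -- base cases: u C v with |u|, |v| ≤ 1
  have hbase : ∀ lu lv : List (Fin 2), lu.length ≤ 1 → lv.length ≤ 1 →
      ∀ w ∈ W, (wp lu * C * wp lv) w ∈ W := by
    rintro (_ | ⟨a, _ | ⟨a2, lu⟩⟩) (_ | ⟨b, _ | ⟨b2, lv⟩⟩) hl1 hl2 w hw <;>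
      simp_all [hwp_nil, hwp_single]
    · have := h 4 w hw; rwa [show ff 4 = gc from rfl] at this
    · fin_cases b
      · have := h 6 w hw; rwa [show ff 6 = gc * gx from rfl, map_mul] at this
      · have := h 8 w hw; rwa [show ff 8 = gc * gy from rfl, map_mul] at this
    · fin_cases a
      · have := h 5 w hw; rwa [show ff 5 = gx * gc from rfl, map_mul] at this
      · have := h 7 w hw; rwa [show ff 7 = gy * gc from rfl, map_mul] at this
    · fin_cases a <;> fin_cases b
      · have := h 9 w hw; rwa [show ff 9 = gx * gc * gx from rfl, map_mul, map_mul] at this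
      · have := h 10 w hw; rwa [show ff 10 = gx * gc * gy from rfl, map_mul, map_mul] at this
      · have := h 11 w hw; rwa [show ff 11 = gy * gc * gx from rfl, map_mul, map_mul] at this
      · have := h 12 w hw; rwa [show ff 12 = gy * gc * gy from rfl, map_mul, map_mul] at this
  -- the main induction
  have L1 : ∀ k (lu m : List (Fin 2)), lu.length + m.length ≤ k →
      ∀ w ∈ W, (wp lu * C * wp m.reverse) w ∈ W := by
    intro k
    induction k with
    | zero =>
      intro lu m hl w hw
      have hlu : lu = [] := List.eq_nil_of_length_eq_zero (by omega)
      have hm : m = [] := List.eq_nil_of_length_eq_zero (by omega)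
      subst hlu; subst hm
      exact hbase [] [] (by simp) (by simp) w hw
    | succ k ih =>
      intro lu m hl w hw
      rcases m with _ | ⟨a, m1⟩
      · -- m = []
        rcases lu with _ | ⟨a', lu1⟩
        · exact hbase [] [] (by simp) (by simp) w hw
        rcases lu1 with _ | ⟨b', lu2⟩
        · exact hbase [a'] [] (by simp) (by simp) w hw
        · have key1 : wp (a' :: b' :: lu2) * C * wp (([] : List (Fin 2)).reverse)
              = (Pg a' * Pg b') * (wp lu2 * C * wp (([] : List (Fin 2)).reverse)) := by
            rw [hwp_cons, hwp_cons]
            simp only [mul_assoc]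
          rw [key1, Module.End.mul_apply]
          exact hpair a' b' _ (ih lu2 [] (by simp at hl ⊢; omega) w hw)
      rcases m1 with _ | ⟨b, m2⟩
      · -- m = [a]
        rcases lu with _ | ⟨a', lu1⟩
        · exact hbase [] [a] (by simp) (by simp) w hw
        rcases lu1 with _ | ⟨b', lu2⟩
        · exact hbase [a'] [a] (by simp) (by simp) w hw
        · have key1 : wp (a' :: b' :: lu2) * C * wp ([a] : List (Fin 2)).reverse
              = (Pg a' * Pg b') * (wp lu2 * C * wp ([a] : List (Fin 2)).reverse) := by
            rw [hwp_cons, hwp_cons]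
            simp only [mul_assoc]
          rw [key1, Module.End.mul_apply]
          exact hpair a' b' _ (ih lu2 [a] (by simp at hl ⊢; omega) w hw)
      · -- m = a :: b :: m2 : strip two letters from the right of the reversed word
        have hrev : wp ((a :: b :: m2).reverse) = wp m2.reverse * (Pg b * Pg a) := by
          rw [List.reverse_cons, List.reverse_cons, hwp_append, hwp_append,
            hwp_single, hwp_single]
          simp only [mul_assoc]
        rw [hrev, show wp lu * C * (wp m2.reverse * (Pg b * Pg a))
            = (wp lu * C * wp m2.reverse) * (Pg b * Pg a) from by simp only [mul_assoc],
          Module.End.mul_apply]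
        exact ih lu m2 (by simp at hl ⊢; omega) _ (hpair b a w hw)
  have L1' : ∀ lu lv : List (Fin 2), ∀ w ∈ W, (wp lu * C * wp lv) w ∈ W := by
    intro lu lv w hw
    have := L1 (lu.length + lv.reverse.length) lu lv.reverse le_rfl w hw
    rwa [List.reverse_reverse] at this
  -- the submodules N and U
  set N : Submodule ℂ V :=
    Submodule.span ℂ {z | ∃ lu lv : List (Fin 2), ∃ w, w ∈ W ∧ z = (wp lu * C * wp lv) w}
    with hN
  set U : Submodule ℂ V :=
    Submodule.span ℂ {z | ∃ l : List (Fin 2), ∃ w, w ∈ W ∧ z = wp l w} with hU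
  have hNW : N ≤ W := by
    rw [hN]
    refine Submodule.span_le.2 ?_
    rintro z ⟨lu, lv, w, hw, rfl⟩
    exact L1' lu lv w hw
  have hNP : ∀ i : Fin 2, ∀ z ∈ N, Pg i z ∈ N := by
    intro i z hz
    have hle : N.map (Pg i) ≤ N := by
      rw [hN, Submodule.map_span]
      refine Submodule.span_le.2 ?_
      rintro _ ⟨z, ⟨lu, lv, w, hw, rfl⟩, rfl⟩
      refine Submodule.subset_span ⟨i :: lu, lv, w, hw, ?_⟩
      rw [hwp_cons]
      simp only [mul_assoc, Module.End.mul_apply]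
    exact hle (Submodule.mem_map_of_mem hz)
  have hWU : W ≤ U := by
    intro w hw
    exact Submodule.subset_span ⟨[], w, hw, by rw [hwp_nil]; rfl⟩
  have hUP : ∀ i : Fin 2, ∀ z ∈ U, Pg i z ∈ U := by
    intro i z hz
    have hle : U.map (Pg i) ≤ U := by
      rw [hU, Submodule.map_span]
      refine Submodule.span_le.2 ?_
      rintro _ ⟨z, ⟨l, w, hw, rfl⟩, rfl⟩
      refine Submodule.subset_span ⟨i :: l, w, hw, ?_⟩
      rw [hwp_cons, Module.End.mul_apply]
    exact hle (Submodule.mem_map_of_mem hz)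
  have hCU : ∀ z ∈ U, C z ∈ N := by
    intro z hz
    have hle : U.map C ≤ N := by
      rw [hU, Submodule.map_span]
      refine Submodule.span_le.2 ?_
      rintro _ ⟨z, ⟨l, w, hw, rfl⟩, rfl⟩
      refine Submodule.subset_span ⟨[], l, w, hw, ?_⟩
      rw [hwp_nil, one_mul, Module.End.mul_apply]
    exact hle (Submodule.mem_map_of_mem hz)
  -- quotient and trace argument
  set N' : Submodule ℂ U := N.comap U.subtype with hN'
  set pU : U →ₗ[ℂ] U := (Pg 0).restrict (hUP 0) with hpU
  set qU : U →ₗ[ℂ] U := (Pg 1).restrict (hUP 1) with hqU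
  have hpN : N' ≤ N'.comap pU := by
    intro x hx
    simp only [Submodule.mem_comap, hN', Submodule.subtype_apply] at hx ⊢
    rw [hpU, LinearMap.restrict_coe_apply]
    exact hNP 0 _ hx
  have hqN : N' ≤ N'.comap qU := by
    intro x hx
    simp only [Submodule.mem_comap, hN', Submodule.subtype_apply] at hx ⊢
    rw [hqU, LinearMap.restrict_coe_apply]
    exact hNP 1 _ hx
  set pbar : (U ⧸ N') →ₗ[ℂ] (U ⧸ N') := N'.mapQ N' pU hpN with hpbar
  set qbar : (U ⧸ N') →ₗ[ℂ] (U ⧸ N') := N'.mapQ N' qU hqN with hqbar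
  have hCapply : ∀ x : V, C x = Pg 0 (Pg 1 x) - Pg 1 (Pg 0 x) - x := by
    intro x
    have : C = Pg 0 * Pg 1 - Pg 1 * Pg 0 - 1 := by
      rw [hC, gc, map_sub, map_sub, map_mul, map_mul, map_one]; rfl
    rw [this]
    simp [Module.End.mul_apply]
  have hcomm : pbar * qbar - qbar * pbar = 1 := by
    apply Submodule.linearMap_qext
    refine LinearMap.ext fun u => ?_
    simp only [LinearMap.comp_apply, Submodule.mkQ_apply, LinearMap.sub_apply,
      Module.End.mul_apply, Module.End.one_apply, hpbar, hqbar, Submodule.mapQ_apply]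
    rw [← Submodule.Quotient.mk_sub]
    rw [Submodule.Quotient.eq]
    have hval : ((pU (qU u) - qU (pU u) - u : U) : V) = C (u : V) := by
      rw [hCapply]
      have hcoe : ((pU (qU u) - qU (pU u) - u : U) : V)
          = ((pU (qU u) : U) : V) - ((qU (pU u) : U) : V) - ((u : U) : V) := by
        push_cast
        ring_nf
      rw [hcoe, hpU, hqU, LinearMap.restrict_coe_apply, LinearMap.restrict_coe_apply,
        LinearMap.restrict_coe_apply, LinearMap.restrict_coe_apply]
    show pU (qU u) - qU (pU u) - u ∈ N'
    simp only [hN', Submodule.mem_comap, Submodule.subtype_apply]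
    rw [hval]
    exact hCU _ u.2
  -- trace argument
  have htr0 : LinearMap.trace ℂ (U ⧸ N') (1 : (U ⧸ N') →ₗ[ℂ] (U ⧸ N')) = 0 := by
    rw [← hcomm, map_sub, LinearMap.trace_mul_comm, sub_self]
  rw [LinearMap.trace_one] at htr0
  have hfr : Module.finrank ℂ (U ⧸ N') = 0 := by exact_mod_cast htr0
  have hsub : Subsingleton (U ⧸ N') := Module.finrank_zero_iff.mp hfr
  have htop : N' = ⊤ := Submodule.Quotient.subsingleton_iff.mp hsub
  intro w hw
  have hwU : w ∈ U := hWU hw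
  have hwN : w ∈ N := by
    have hmem' : (⟨w, hwU⟩ : U) ∈ N' := htop ▸ Submodule.mem_top
    simpa [hN', Submodule.mem_comap, Submodule.subtype_apply] using hmem'
  exact hNW (hNP 0 w hwN)


end Stmt2Aux
end

/-- Counterexample to Volčič's conjecture in the non-homogeneous case: there are
`f₁, …, f_l, g` over `ℂ` such that all joint invariant subspaces of evaluations of the
`f j` are invariant for `g`, yet `g` is not in the unital subalgebra generated by the `f j`. -/
theorem stmt2 :
    ∃ (d l : ℕ) (f : Fin l → FreeAlgebra ℂ (Fin d)) (g : FreeAlgebra ℂ (Fin d)),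
      1 ≤ d ∧ 2 ≤ l ∧
      (∀ (n : ℕ) (X : Fin d → Matrix (Fin n) (Fin n) ℂ) (W : Submodule ℂ (Fin n → ℂ)),
        (∀ j, ∀ w ∈ W, (FreeAlgebra.lift ℂ X (f j)).mulVec w ∈ W) →
        ∀ w ∈ W, (FreeAlgebra.lift ℂ X g).mulVec w ∈ W) ∧
      g ∉ Algebra.adjoin ℂ (Set.range f) := by
  refine ⟨2, 13, Stmt2Aux.ff, Stmt2Aux.gx, by norm_num, by norm_num, ?_, Stmt2Aux.gx_not_mem⟩
  intro n X W h
  let π : Stmt2Aux.F2 →ₐ[ℂ] Module.End ℂ (Fin n → ℂ) :=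
    (Matrix.toLinAlgEquiv'.toAlgHom : Matrix (Fin n) (Fin n) ℂ →ₐ[ℂ] _).comp
      (FreeAlgebra.lift ℂ X)
  have hconv : ∀ (a : Stmt2Aux.F2) (w : Fin n → ℂ),
      (FreeAlgebra.lift ℂ X a).mulVec w = π a w := by
    intro a w
    simp only [π, AlgHom.comp_apply, AlgEquiv.toAlgHom_eq_coe, AlgHom.coe_coe,
      Matrix.toLinAlgEquiv'_apply]
    exact (Matrix.toLinAlgEquiv'_apply _ _).symm
  have hk := Stmt2Aux.key π W (fun j w hw => by rw [← hconv]; exact h j w hw)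
  intro w hw
  rw [hconv]
  exact hk w hw
end

section
/- (Salomon–Shalit–Shamovich) Let K be an algebraically closed field of characteristic zero, let f₁,…,f_l ∈ K⟨x₁,…,x_d⟩ be homogeneous noncommutative polynomials and let g ∈ K⟨x₁,…,x_d⟩. Then the following are equivalent: (i) for every n ∈ ℕ and every tuple X = (X₁,…,X_d) of n×n matrices over K, if f_j(X) = 0 for all j = 1,…,l then g(X) = 0; (ii) g belongs to the two-sided ideal of K⟨x₁,…,x_d⟩ generated by f₁,…,f_l. -/
namespace SSSaux

variable {K : Type*} [Field K] {d : ℕ}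

noncomputable def word (L : List (Fin d)) : FreeAlgebra K (Fin d) :=
  (L.map (FreeAlgebra.ι K)).prod

@[simp] lemma word_nil : (word [] : FreeAlgebra K (Fin d)) = 1 := rfl

@[simp] lemma word_cons (i : Fin d) (L : List (Fin d)) :
    (word (i :: L) : FreeAlgebra K (Fin d)) = FreeAlgebra.ι K i * word L := by
  simp [word]

lemma word_append (L₁ L₂ : List (Fin d)) :
    (word (L₁ ++ L₂) : FreeAlgebra K (Fin d)) = word L₁ * word L₂ := by
  simp [word]

lemma e_ι (i : Fin d) :
    FreeAlgebra.equivMonoidAlgebraFreeMonoid (FreeAlgebra.ι K i)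
      = MonoidAlgebra.single (FreeMonoid.of i) (1 : K) := by
  simp [FreeAlgebra.equivMonoidAlgebraFreeMonoid, MonoidAlgebra.of_apply]

lemma e_word (L : List (Fin d)) :
    FreeAlgebra.equivMonoidAlgebraFreeMonoid (word L : FreeAlgebra K (Fin d))
      = MonoidAlgebra.single (FreeMonoid.ofList L) (1 : K) := by
  induction L with
  | nil => simp [MonoidAlgebra.one_def]
  | cons i L ih =>
      rw [word_cons, map_mul, e_ι, ih, MonoidAlgebra.single_mul_single, one_mul]
      rfl

/-- truncation: kill all components of degree `> N`. -/
noncomputable def P (N : ℕ) : FreeAlgebra K (Fin d) →ₗ[K] FreeAlgebra K (Fin d) :=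
  (FreeAlgebra.equivMonoidAlgebraFreeMonoid.symm.toLinearMap.comp
    ({ toFun := fun x => MonoidAlgebra.ofCoeff (x.coeff.filter (fun m : FreeMonoid (Fin d) => (FreeMonoid.toList m).length ≤ N))
       map_add' := fun x y => by
         rw [MonoidAlgebra.coeff_add, Finsupp.filter_add, MonoidAlgebra.ofCoeff_add]
       map_smul' := fun c x => by
         simp only [MonoidAlgebra.coeff_smul, Finsupp.filter_smul, MonoidAlgebra.ofCoeff_smul,
           RingHom.id_apply] } :
        MonoidAlgebra K (FreeMonoid (Fin d)) →ₗ[K] MonoidAlgebra K (FreeMonoid (Fin d)))).comp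
    FreeAlgebra.equivMonoidAlgebraFreeMonoid.toLinearMap

lemma P_word (N : ℕ) (L : List (Fin d)) :
    P N (word L : FreeAlgebra K (Fin d)) = if L.length ≤ N then word L else 0 := by
  simp only [P, LinearMap.coe_comp, Function.comp_apply, AlgEquiv.toLinearMap_apply,
    LinearMap.coe_mk, AddHom.coe_mk, e_word]
  rw [MonoidAlgebra.coeff_single]
  by_cases h : L.length ≤ N
  · rw [Finsupp.filter_single_of_pos _ (by simpa [FreeMonoid.toList_ofList] using h), if_pos h]
    exact (AlgEquiv.symm_apply_eq _).mpr (e_word L).symm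
  · rw [Finsupp.filter_single_of_neg (fun m : FreeMonoid (Fin d) => (FreeMonoid.toList m).length ≤ N)
      (by simpa [FreeMonoid.toList_ofList] using h), if_neg h,
      MonoidAlgebra.ofCoeff_zero, map_zero]

/-- the span of words of length `k`. -/
def spanW (k : ℕ) : Submodule K (FreeAlgebra K (Fin d)) :=
  Submodule.span K {w : FreeAlgebra K (Fin d) |
    ∃ L : List (Fin d), L.length = k ∧ w = (L.map (FreeAlgebra.ι K)).prod}

lemma P_hom (N k : ℕ) {x : FreeAlgebra K (Fin d)} (hx : x ∈ (spanW k : Submodule K _)) :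
    P N x = if k ≤ N then x else 0 := by
  refine Submodule.span_induction (p := fun x _ => P N x = if k ≤ N then x else 0)
    ?_ ?_ ?_ ?_ hx
  · rintro x ⟨L, hL, rfl⟩
    rw [show (L.map (FreeAlgebra.ι K)).prod = word L from rfl, P_word, hL]
  · simp
  · intro x y _ _ hx hy
    rw [map_add, hx, hy]; split <;> simp
  · intro c x _ hx
    rw [map_smul, hx]; split <;> simp

lemma words_span (x : FreeAlgebra K (Fin d)) :
    x ∈ Submodule.span K {w : FreeAlgebra K (Fin d) | ∃ L : List (Fin d), w = word L} := by
  induction x using FreeAlgebra.induction with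
  | grade0 r =>
      rw [Algebra.algebraMap_eq_smul_one]
      exact Submodule.smul_mem _ _ (Submodule.subset_span ⟨[], rfl⟩)
  | grade1 i =>
      exact Submodule.subset_span ⟨[i], by simp⟩
  | add a b ha hb => exact Submodule.add_mem _ ha hb
  | mul a b ha hb =>
      refine Submodule.span_induction (p := fun a _ => a * b ∈ Submodule.span K _)
        ?_ ?_ ?_ ?_ ha
      · rintro a ⟨u, rfl⟩
        refine Submodule.span_induction (p := fun b _ => word u * b ∈ Submodule.span K _)
          ?_ ?_ ?_ ?_ hb
        · rintro b ⟨v, rfl⟩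
          exact Submodule.subset_span ⟨u ++ v, (word_append u v).symm⟩
        · simp
        · intro x y _ _ hx hy; rw [mul_add]; exact Submodule.add_mem _ hx hy
        · intro c x _ hx; rw [mul_smul_comm]; exact Submodule.smul_mem _ _ hx
      · simp
      · intro x y _ _ hx hy; rw [add_mul]; exact Submodule.add_mem _ hx hy
      · intro c x _ hx; rw [smul_mul_assoc]; exact Submodule.smul_mem _ _ hx

lemma conj_span (u v : List (Fin d)) (k : ℕ) {c : FreeAlgebra K (Fin d)}
    (hc : c ∈ (spanW k : Submodule K _)) :
    word u * c * word v ∈ (spanW (u.length + k + v.length) : Submodule K _) := by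
  refine Submodule.span_induction
    (p := fun c _ => word u * c * word v ∈ (spanW (u.length + k + v.length) : Submodule K _))
    ?_ ?_ ?_ ?_ hc
  · rintro c ⟨w, hw, rfl⟩
    refine Submodule.subset_span ⟨u ++ w ++ v, by simp [hw]; omega, ?_⟩
    simp [word, mul_assoc]
  · simp
  · intro x y _ _ hx hy
    rw [mul_add, add_mul]; exact Submodule.add_mem _ hx hy
  · intro a x _ hx
    rw [mul_smul_comm, smul_mul_assoc]; exact Submodule.smul_mem _ _ hx

lemma reduce (N : ℕ) (c : FreeAlgebra K (Fin d)) (Isub : Submodule K (FreeAlgebra K (Fin d)))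
    (h : ∀ u v : List (Fin d), P N (word u * c * word v) ∈ Isub) :
    ∀ a b : FreeAlgebra K (Fin d), P N (a * c * b) ∈ Isub := by
  intro a b
  refine Submodule.span_induction (p := fun a _ => ∀ b', P N (a * c * b') ∈ Isub)
    ?_ ?_ ?_ ?_ (words_span a) b
  · rintro a ⟨u, rfl⟩ b'
    refine Submodule.span_induction (p := fun b' _ => P N (word u * c * b') ∈ Isub)
      ?_ ?_ ?_ ?_ (words_span b')
    · rintro b' ⟨v, rfl⟩; exact h u v
    · simp only [mul_zero, map_zero]; exact Submodule.zero_mem _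
    · intro x y _ _ hx hy; simp only [mul_add, map_add]; exact Submodule.add_mem _ hx hy
    · intro a x _ hx; simp only [mul_smul_comm, map_smul]; exact Submodule.smul_mem _ _ hx
  · intro b'; simp only [zero_mul, map_zero]; exact Submodule.zero_mem _
  · intro x y _ _ hx hy b'; simp only [add_mul, map_add]
    exact Submodule.add_mem _ (hx b') (hy b')
  · intro a x _ hx b'; simp only [smul_mul_assoc, map_smul]
    exact Submodule.smul_mem _ _ (hx b')

end SSSaux

set_option maxHeartbeats 1000000 in
/-- Salomon–Shalit–Shamovich: homogeneous Nullstellensatz for true zeros. -/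
theorem stmt5 (K : Type*) [Field K] [IsAlgClosed K] [CharZero K]
    (d l : ℕ) (f : Fin l → FreeAlgebra K (Fin d)) (g : FreeAlgebra K (Fin d))
    (hf : ∀ j, ∃ k : ℕ, f j ∈ Submodule.span K
      {w : FreeAlgebra K (Fin d) |
        ∃ L : List (Fin d), L.length = k ∧ w = (L.map (FreeAlgebra.ι K)).prod}) :
    (∀ (n : ℕ) (X : Fin d → Matrix (Fin n) (Fin n) K),
        (∀ j, FreeAlgebra.lift K X (f j) = 0) → FreeAlgebra.lift K X g = 0)
      ↔ g ∈ TwoSidedIdeal.span (Set.range f) := by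
  classical
  constructor
  · intro hX
    set N : ℕ := (FreeAlgebra.equivMonoidAlgebraFreeMonoid g).coeff.support.sup
      (fun m => (FreeMonoid.toList m).length) with hNdef
    set I : TwoSidedIdeal (FreeAlgebra K (Fin d)) := TwoSidedIdeal.span (Set.range f) with hI
    set Isub : Submodule K (FreeAlgebra K (Fin d)) :=
      { carrier := (I : Set (FreeAlgebra K (Fin d)))
        add_mem' := fun hx hy => add_mem hx hy
        zero_mem' := zero_mem I
        smul_mem' := fun c x hx => by
          rw [Algebra.smul_def]
          exact I.mul_mem_left _ _ hx } with hIsub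
    set S : Submodule K (FreeAlgebra K (Fin d)) := Submodule.span K
      ({x | ∃ (j : Fin l) (a b : FreeAlgebra K (Fin d)), x = a * f j * b} ∪
       {x | ∃ (a b : FreeAlgebra K (Fin d)) (L : List (Fin d)),
          N < L.length ∧ x = a * SSSaux.word L * b}) with hS
    have hSl : ∀ (c x : FreeAlgebra K (Fin d)), x ∈ S → c * x ∈ S := by
      intro c x hx
      refine Submodule.span_induction (p := fun x _ => c * x ∈ S) ?_ ?_ ?_ ?_ hx
      · rintro x (⟨j, a, b, rfl⟩ | ⟨a, b, L, hL, rfl⟩)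
        · exact Submodule.subset_span (Or.inl ⟨j, c * a, b, by noncomm_ring⟩)
        · exact Submodule.subset_span (Or.inr ⟨c * a, b, L, hL, by noncomm_ring⟩)
      · simp only [mul_zero]; exact S.zero_mem
      · intro x y _ _ hx hy; simp only [mul_add]; exact S.add_mem hx hy
      · intro k x _ hx; simp only [mul_smul_comm]; exact S.smul_mem _ hx
    let Lm : Fin d → Module.End K (FreeAlgebra K (Fin d) ⧸ S) := fun i =>
      Submodule.mapQ S S (LinearMap.mulLeft K (FreeAlgebra.ι K i))
        (fun x hx => hSl (FreeAlgebra.ι K i) x hx)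
    set φ : FreeAlgebra K (Fin d) →ₐ[K] Module.End K (FreeAlgebra K (Fin d) ⧸ S) :=
      FreeAlgebra.lift K Lm with hφdef
    have hφ : ∀ a b : FreeAlgebra K (Fin d), φ a (S.mkQ b) = S.mkQ (a * b) := by
      intro a
      induction a using FreeAlgebra.induction with
      | grade0 r =>
          intro b
          rw [AlgHom.commutes, Module.algebraMap_end_apply, ← map_smul, Algebra.smul_def]
      | grade1 i =>
          intro b
          rw [hφdef, FreeAlgebra.lift_ι_apply]
          simp [Lm, Submodule.mapQ_apply]
          rfl
      | mul x y hx hy =>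
          intro b
          rw [map_mul]
          simp only [Module.End.mul_apply]
          rw [hy, hx, mul_assoc]
      | add x y hx hy =>
          intro b
          rw [map_add]
          simp only [LinearMap.add_apply]
          rw [hx, hy, ← map_add, ← add_mul]
    have hQfin : Module.Finite K (FreeAlgebra K (Fin d) ⧸ S) := by
      have hWfin : (SSSaux.word '' {L : List (Fin d) | L.length ≤ N}
          : Set (FreeAlgebra K (Fin d))).Finite :=
        (List.finite_length_le (Fin d) N).image _
      refine ⟨Submodule.fg_def.mpr
        ⟨S.mkQ '' (SSSaux.word '' {L | L.length ≤ N}), hWfin.image _, ?_⟩⟩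
      rw [eq_top_iff]
      rintro q -
      obtain ⟨x, rfl⟩ := Submodule.mkQ_surjective S q
      have hx := SSSaux.words_span (K := K) x
      have hmem : S.mkQ x ∈ Submodule.map S.mkQ
          (Submodule.span K {w | ∃ L : List (Fin d), w = SSSaux.word L}) :=
        Submodule.mem_map_of_mem hx
      rw [Submodule.map_span] at hmem
      refine (Submodule.span_le.mpr ?_) hmem
      rintro y ⟨w, ⟨L, rfl⟩, rfl⟩
      by_cases hL : L.length ≤ N
      · exact Submodule.subset_span ⟨SSSaux.word L, ⟨L, hL, rfl⟩, rfl⟩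
      · have hLS : SSSaux.word L ∈ S := Submodule.subset_span
          (Or.inr ⟨1, 1, L, by omega, by rw [one_mul, mul_one]⟩)
        have h0 : S.mkQ (SSSaux.word L) = 0 := (Submodule.Quotient.mk_eq_zero S).mpr hLS
        exact Set.mem_of_eq_of_mem h0 (Submodule.zero_mem _)
    letI := hQfin
    set n := Module.finrank K (FreeAlgebra K (Fin d) ⧸ S) with hn
    set bQ : Module.Basis (Fin n) K (FreeAlgebra K (Fin d) ⧸ S) := Module.finBasis K _ with hbQ
    set Mx := LinearMap.toMatrixAlgEquiv bQ with hMx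
    set X : Fin d → Matrix (Fin n) (Fin n) K := fun i => Mx (φ (FreeAlgebra.ι K i)) with hXdef
    have hlift : FreeAlgebra.lift K X = Mx.toAlgHom.comp φ := by
      apply FreeAlgebra.hom_ext
      funext i
      simp [hXdef, FreeAlgebra.lift_ι_apply]
    have hg0 : φ g = 0 := by
      have hf0 : ∀ j, FreeAlgebra.lift K X (f j) = 0 := by
        intro j
        rw [hlift]
        have hfj : φ (f j) = 0 := by
          apply LinearMap.ext
          intro q
          obtain ⟨b, rfl⟩ := Submodule.mkQ_surjective S q
          rw [hφ, LinearMap.zero_apply]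
          exact (Submodule.Quotient.mk_eq_zero S).mpr
            (Submodule.subset_span (Or.inl ⟨j, 1, b, by rw [one_mul]⟩))
        simp [hfj]
      have hXg := hX n X hf0
      rw [hlift] at hXg
      exact Mx.injective (by simpa using hXg)
    have hgS : g ∈ S := by
      have h1 := hφ g 1
      rw [hg0] at h1
      simp only [LinearMap.zero_apply, mul_one] at h1
      exact (Submodule.Quotient.mk_eq_zero S).mp h1.symm
    have hPg : SSSaux.P N g = g := by
      simp only [SSSaux.P, LinearMap.coe_comp, Function.comp_apply,
        AlgEquiv.toLinearMap_apply, LinearMap.coe_mk, AddHom.coe_mk]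
      have hfilter : Finsupp.filter (fun m : FreeMonoid (Fin d) =>
          (FreeMonoid.toList m).length ≤ N) (FreeAlgebra.equivMonoidAlgebraFreeMonoid g).coeff
          = (FreeAlgebra.equivMonoidAlgebraFreeMonoid g).coeff :=
        (Finsupp.filter_eq_self_iff _ _).mpr
          (fun m hm => Finset.le_sup (Finsupp.mem_support_iff.mpr hm))
      rw [hfilter, MonoidAlgebra.ofCoeff_coeff, AlgEquiv.symm_apply_apply]
    have key : SSSaux.P N g ∈ Isub := by
      refine Submodule.span_induction (p := fun x _ => SSSaux.P N x ∈ Isub) ?_ ?_ ?_ ?_ hgS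
      · rintro x (⟨j, a, b, rfl⟩ | ⟨a, b, L, hL, rfl⟩)
        · refine SSSaux.reduce N (f j) Isub ?_ a b
          intro u v
          obtain ⟨k, hk⟩ := hf j
          have hm := SSSaux.conj_span u v k hk
          rw [SSSaux.P_hom N _ hm]
          split
          · show _ ∈ I
            exact I.mul_mem_right _ _ (I.mul_mem_left _ _ (TwoSidedIdeal.subset_span ⟨j, rfl⟩))
          · exact Isub.zero_mem
        · refine SSSaux.reduce N (SSSaux.word L) Isub ?_ a b
          intro u v
          rw [← SSSaux.word_append, ← SSSaux.word_append, SSSaux.P_word,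
            if_neg (by simp only [List.length_append]; omega)]
          exact Isub.zero_mem
      · simp only [map_zero]; exact Isub.zero_mem
      · intro x y _ _ hx hy; simp only [map_add]; exact Isub.add_mem hx hy
      · intro c x _ hx; simp only [map_smul]; exact Isub.smul_mem _ hx
    rw [hPg] at key
    exact key
  · intro hg n X hfX
    refine (TwoSidedIdeal.mem_ker (FreeAlgebra.lift K X)).mp
      (TwoSidedIdeal.mem_span_iff.mp hg (TwoSidedIdeal.ker (FreeAlgebra.lift K X)) ?_)
    rintro x ⟨j, rfl⟩
    exact (TwoSidedIdeal.mem_ker _).mpr (hfX j)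
end

section
/- (Bergman) Let K be an algebraically closed field of characteristic zero and let f₁,…,f_l, g ∈ K⟨x₁,…,x_d⟩. Then the following are equivalent: (i) for every n ∈ ℕ, every tuple X = (X₁,…,X_d) of n×n matrices over K, and every vector v ∈ Kⁿ, if f_j(X)·v = 0 for all j = 1,…,l then g(X)·v = 0; (ii) g belongs to the left ideal of K⟨x₁,…,x_d⟩ generated by f₁,…,f_l, i.e., g = Σⱼ pⱼ fⱼ for some p₁,…,p_l ∈ K⟨x₁,…,x_d⟩. -/
namespace BergmanAux

variable (K : Type*) [Field K] {d : ℕ}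

/-- The product of generators along a word. -/
noncomputable def word (w : List (Fin d)) : FreeAlgebra K (Fin d) :=
  (w.map (FreeAlgebra.ι K)).prod

@[simp] lemma word_nil : word K ([] : List (Fin d)) = 1 := rfl

lemma word_cons (i : Fin d) (w : List (Fin d)) :
    word K (i :: w) = FreeAlgebra.ι K i * word K w := by
  simp [word]

lemma word_append (u v : List (Fin d)) :
    word K (u ++ v) = word K u * word K v := by
  simp [word]

/-- The span of words of length at most `N`. -/
noncomputable def S (N : ℕ) : Submodule K (FreeAlgebra K (Fin d)) :=
  Submodule.span K (word K '' {w : List (Fin d) | w.length ≤ N})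

lemma S_mono {M N : ℕ} (h : M ≤ N) : (S K M : Submodule K (FreeAlgebra K (Fin d))) ≤ S K N :=
  Submodule.span_mono (Set.image_mono fun w hw => le_trans hw h)

lemma word_mem_S {N : ℕ} (w : List (Fin d)) (hw : w.length ≤ N) :
    word K w ∈ S K N :=
  Submodule.subset_span ⟨w, hw, rfl⟩

lemma one_mem_S (N : ℕ) : (1 : FreeAlgebra K (Fin d)) ∈ S K N :=
  word_nil K ▸ word_mem_S K [] (Nat.zero_le N)

lemma mul_mem_S {M N : ℕ} {a b : FreeAlgebra K (Fin d)}
    (ha : a ∈ S K M) (hb : b ∈ S K N) : a * b ∈ S K (M + N) := by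
  have key : (S K M : Submodule K (FreeAlgebra K (Fin d))) * S K N ≤ S K (M + N) := by
    rw [S, S, Submodule.span_mul_span]
    apply Submodule.span_le.2
    rintro x ⟨_, ⟨u, hu, rfl⟩, _, ⟨v, hv, rfl⟩, rfl⟩
    show word K u * word K v ∈ S K (M + N)
    rw [← word_append]
    exact word_mem_S K _ (by simpa using Nat.add_le_add hu hv)
  exact key (Submodule.mul_mem_mul ha hb)

lemma exists_mem_S (a : FreeAlgebra K (Fin d)) : ∃ N, a ∈ S K N := by
  have ha : a ∈ Algebra.adjoin K (Set.range (FreeAlgebra.ι K : Fin d → FreeAlgebra K (Fin d))) := by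
    rw [FreeAlgebra.adjoin_range_ι]; trivial
  induction ha using Algebra.adjoin_induction with
  | mem x hx =>
    obtain ⟨i, rfl⟩ := hx
    exact ⟨1, by simpa [word_cons] using word_mem_S K [i] (by simp)⟩
  | algebraMap r =>
    exact ⟨0, by rw [Algebra.algebraMap_eq_smul_one]; exact Submodule.smul_mem _ _ (one_mem_S K 0)⟩
  | add x y hx hy ihx ihy =>
    obtain ⟨M, hM⟩ := ihx; obtain ⟨N, hN⟩ := ihy
    exact ⟨max M N, Submodule.add_mem _ (S_mono K (le_max_left M N) hM)
      (S_mono K (le_max_right M N) hN)⟩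
  | mul x y hx hy ihx ihy =>
    obtain ⟨M, hM⟩ := ihx; obtain ⟨N, hN⟩ := ihy
    exact ⟨M + N, mul_mem_S K hM hN⟩

end BergmanAux

set_option maxHeartbeats 1000000 in
set_option synthInstance.maxHeartbeats 100000 in
open BergmanAux in
/-- Bergman's Nullstellensatz for directional zeros. -/
theorem stmt6 (K : Type*) [Field K] [IsAlgClosed K] [CharZero K]
    (d l : ℕ) (f : Fin l → FreeAlgebra K (Fin d)) (g : FreeAlgebra K (Fin d)) :
    (∀ (n : ℕ) (X : Fin d → Matrix (Fin n) (Fin n) K) (v : Fin n → K),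
        (∀ j, (FreeAlgebra.lift K X (f j)).mulVec v = 0) →
        (FreeAlgebra.lift K X g).mulVec v = 0)
      ↔ ∃ p : Fin l → FreeAlgebra K (Fin d), g = ∑ j, p j * f j := by
  constructor
  · intro h
    classical
    -- the left ideal generated by the `f j`
    set I : Submodule (FreeAlgebra K (Fin d)) (FreeAlgebra K (Fin d)) :=
      Submodule.span (FreeAlgebra K (Fin d)) (Set.range f) with hI
    -- the K-linear quotient map
    let πK : FreeAlgebra K (Fin d) →ₗ[K] (FreeAlgebra K (Fin d) ⧸ I) := (I.mkQ).restrictScalars K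
    have hπ : ∀ (a b : FreeAlgebra K (Fin d)), πK (a * b) = a • πK b := by
      intro a b
      show I.mkQ (a * b) = a • I.mkQ b
      rw [← smul_eq_mul, map_smul]
    -- choose N₀ large enough
    obtain ⟨Ng, hNg⟩ := exists_mem_S K g
    choose Nf hNf using fun j => exists_mem_S K (f j)
    set N₀ : ℕ := max Ng (Finset.univ.sup Nf) with hN₀
    have hgS : g ∈ S K N₀ := S_mono K (le_max_left _ _) hNg
    have hfS : ∀ j, f j ∈ S K N₀ := fun j =>
      S_mono K (le_trans (Finset.le_sup (Finset.mem_univ j)) (le_max_right _ _)) (hNf j)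
    set N : ℕ := N₀ + 1 with hN
    -- images in the quotient
    set W : Submodule K (FreeAlgebra K (Fin d) ⧸ I) := (S K N₀).map πK with hW
    set V : Submodule K (FreeAlgebra K (Fin d) ⧸ I) := (S K N).map πK with hV
    have hWV : W ≤ V := Submodule.map_mono (S_mono K (Nat.le_succ N₀))
    -- finite dimensionality
    have hfin : ((word K '' {w : List (Fin d) | w.length ≤ N}) :
        Set (FreeAlgebra K (Fin d))).Finite :=
      Set.Finite.image _ (List.finite_length_le (Fin d) N)
    have : Module.Finite K (S K N : Submodule K (FreeAlgebra K (Fin d))) := Module.Finite.span_of_finite K hfin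
    have : Module.Finite K V := by
      rw [hV]
      exact Module.Finite.map _ _
    -- compatible projection
    set Wc : Submodule K V := W.comap V.subtype with hWc
    obtain ⟨Wc', hc⟩ := Wc.exists_isCompl
    set pr : V →ₗ[K] V := Wc.subtype ∘ₗ Submodule.linearProjOfIsCompl Wc Wc' hc with hprdef
    have hprW : ∀ x : V, (pr x : FreeAlgebra K (Fin d) ⧸ I) ∈ W := fun x =>
      (Submodule.linearProjOfIsCompl Wc Wc' hc x).2
    have hpr : ∀ (x : V), (x : FreeAlgebra K (Fin d) ⧸ I) ∈ W → pr x = x := by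
      intro x hx
      have h2 := Submodule.linearProjOfIsCompl_apply_left hc (⟨x, hx⟩ : Wc)
      exact congrArg Wc.subtype h2
    -- left multiplication by a generator
    set mulι : Fin d → ((FreeAlgebra K (Fin d) ⧸ I) →ₗ[K] (FreeAlgebra K (Fin d) ⧸ I)) := fun i =>
      { toFun := fun q2 => FreeAlgebra.ι K i • q2
        map_add' := fun a b => smul_add _ a b
        map_smul' := fun c q2 => smul_comm (FreeAlgebra.ι K i) c q2 } with hmulι
    have hmulι_mem : ∀ (i : Fin d) (q : FreeAlgebra K (Fin d) ⧸ I), q ∈ W → mulι i q ∈ V := by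
      rintro i _ ⟨a, ha, rfl⟩
      refine ⟨FreeAlgebra.ι K i * a, ?_, ?_⟩
      · have h1 : FreeAlgebra.ι K i ∈ S K 1 := by
          simpa [word_cons] using word_mem_S K [i] (by simp)
        have h2 := mul_mem_S K h1 ha
        rwa [Nat.add_comm] at h2
      · rw [hπ]; rfl
    -- the operators
    set Xi : Fin d → (V →ₗ[K] V) := fun i =>
      LinearMap.codRestrict V ((mulι i) ∘ₗ V.subtype ∘ₗ pr)
        (fun x => hmulι_mem i _ (hprW x)) with hXi
    have hXi_apply : ∀ (i : Fin d) (x : V), ((Xi i x : FreeAlgebra K (Fin d) ⧸ I)) = FreeAlgebra.ι K i • (pr x : FreeAlgebra K (Fin d) ⧸ I) := by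
      intro i x; rfl
    -- base point
    have h1V : πK 1 ∈ V := ⟨1, one_mem_S K N, rfl⟩
    set q1V : V := ⟨πK 1, h1V⟩ with hq1V
    set Φ : FreeAlgebra K (Fin d) →ₐ[K] Module.End K V := FreeAlgebra.lift K Xi with hΦ
    have hΦι : ∀ i, Φ (FreeAlgebra.ι K i) = Xi i := fun i => FreeAlgebra.lift_ι_apply _ _
    -- crux: words of length ≤ N evaluate correctly on q1V
    have crux : ∀ w : List (Fin d), w.length ≤ N →
        ((Φ (word K w)) q1V : FreeAlgebra K (Fin d) ⧸ I) = πK (word K w) := by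
      intro w
      induction w with
      | nil => intro _; simp [word_nil, map_one]; rfl
      | cons i w ih =>
        intro hw
        have hw' : w.length ≤ N₀ := Nat.lt_succ_iff.mp (by simp at hw; omega)
        have hwN : w.length ≤ N := le_trans hw' (Nat.le_succ N₀)
        have hmemW : πK (word K w) ∈ W := ⟨word K w, word_mem_S K w hw', rfl⟩
        have hval : ((Φ (word K w)) q1V : FreeAlgebra K (Fin d) ⧸ I) = πK (word K w) := ih hwN
        have hxeq : (Φ (word K w)) q1V = (⟨πK (word K w), hWV hmemW⟩ : V) :=
          Subtype.ext hval
        rw [word_cons, map_mul, hΦι, Module.End.mul_apply, hxeq, hπ]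
        rw [hXi_apply]
        congr 1
        exact congrArg _ (hpr _ hmemW)
    -- linear extension to S K N
    have ext : ∀ a ∈ S K N, ((Φ a) q1V : FreeAlgebra K (Fin d) ⧸ I) = πK a := by
      intro a ha
      induction ha using Submodule.span_induction with
      | mem x hx =>
        obtain ⟨w, hw, rfl⟩ := hx
        exact crux w hw
      | zero => simp
      | add x y hx hy ihx ihy =>
        rw [map_add, LinearMap.add_apply, map_add, Submodule.coe_add, ihx, ihy]
      | smul c x hx ihx =>
        rw [map_smul, LinearMap.smul_apply, map_smul, SetLike.val_smul, ihx]
    -- the f j annihilate q1V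
    have hf0 : ∀ j, (Φ (f j)) q1V = 0 := by
      intro j
      have hval : ((Φ (f j)) q1V : FreeAlgebra K (Fin d) ⧸ I) = πK (f j) :=
        ext _ (S_mono K (Nat.le_succ N₀) (hfS j))
      have hz : πK (f j) = 0 := by
        show I.mkQ (f j) = 0
        rw [Submodule.mkQ_apply, Submodule.Quotient.mk_eq_zero]
        exact Submodule.subset_span (Set.mem_range_self j)
      exact Subtype.ext (hval.trans hz)
    -- transfer to matrices
    have : Module.Finite K V := by rw [hV]; exact Module.Finite.map _ _
    set n := Module.finrank K V with hn
    set bV : Module.Basis (Fin n) K V := Module.finBasis K V with hbV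
    set X : Fin d → Matrix (Fin n) (Fin n) K := fun i => LinearMap.toMatrix bV bV (Xi i) with hX
    have hliftX : ∀ a : FreeAlgebra K (Fin d), FreeAlgebra.lift K X a = LinearMap.toMatrix bV bV (Φ a) := by
      have : FreeAlgebra.lift K X =
          ((LinearMap.toMatrixAlgEquiv bV).toAlgHom).comp Φ := by
        apply FreeAlgebra.hom_ext
        funext i
        simp only [Function.comp_apply, AlgHom.coe_comp, AlgEquiv.toAlgHom_eq_coe,
          AlgHom.coe_coe, FreeAlgebra.lift_ι_apply, hΦι]
        rfl
      intro a
      rw [this]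
      rfl
    set v : Fin n → K := ⇑(bV.repr q1V) with hv
    have hmv : ∀ a : FreeAlgebra K (Fin d), (FreeAlgebra.lift K X a).mulVec v = ⇑(bV.repr ((Φ a) q1V)) := by
      intro a
      rw [hliftX a, hv]
      exact LinearMap.toMatrix_mulVec_repr bV bV (Φ a) q1V
    have hzero : ∀ j, (FreeAlgebra.lift K X (f j)).mulVec v = 0 := by
      intro j
      rw [hmv, hf0 j]
      simp
    have hg0 : (FreeAlgebra.lift K X g).mulVec v = 0 := h n X v hzero
    rw [hmv g] at hg0
    have hΦg : (Φ g) q1V = 0 := by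
      have := DFunLike.coe_injective (hg0.trans (Finsupp.coe_zero).symm)
      exact (Module.Basis.repr bV).map_eq_zero_iff.mp this
    have hπg : πK g = 0 := by
      rw [← ext g (S_mono K (Nat.le_succ N₀) hgS), hΦg]
      rfl
    have hgI : g ∈ I := by
      rwa [show πK g = I.mkQ g from rfl, Submodule.mkQ_apply,
        Submodule.Quotient.mk_eq_zero] at hπg
    rw [hI] at hgI
    obtain ⟨c, hc⟩ := Submodule.mem_span_range_iff_exists_fun (FreeAlgebra K (Fin d)) |>.mp hgI
    exact ⟨c, by rw [← hc]; simp [smul_eq_mul]⟩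
  · rintro ⟨p, rfl⟩ n X v hv
    rw [map_sum]
    have hsum : ((∑ j, (FreeAlgebra.lift K X) (p j * f j)).mulVec v)
        = ∑ j, ((FreeAlgebra.lift K X) (p j * f j)).mulVec v :=
      map_sum (Matrix.mulVec.addMonoidHomLeft v) _ Finset.univ
    rw [hsum]
    apply Finset.sum_eq_zero
    intro j _
    rw [map_mul, ← Matrix.mulVec_mulVec, hv j, Matrix.mulVec_zero]
end

section
/- Let K be a field, let f₁,…,f_l ∈ K⟨x₁,…,x_d⟩ be homogeneous noncommutative polynomials, and let g ∈ K⟨x₁,…,x_d⟩. Suppose that for some integer m ≥ deg(g) there exist finitely many words u₁,…,u_N in l letters and coefficients α₁,…,α_N ∈ K such that g − Σᵢ αᵢ uᵢ(f₁,…,f_l) lies in I_m, the K-linear span of all words of length greater than m. Then g belongs to the unital K-subalgebra of K⟨x₁,…,x_d⟩ generated by f₁,…,f_l; indeed g = Σᵢ βᵢ uᵢ(f₁,…,f_l), where βᵢ = αᵢ if uᵢ(f₁,…,f_l) is homogeneous of degree at most m and βᵢ = 0 otherwise. -/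
section Aux
variable (K : Type*) [Field K] (d : ℕ)

lemma aux_equiv (L : FreeMonoid (Fin d)) :
    FreeAlgebra.equivMonoidAlgebraFreeMonoid (R := K) (X := Fin d)
        ((FreeMonoid.toList L).map (FreeAlgebra.ι K)).prod
      = MonoidAlgebra.single L 1 := by
  induction L using FreeMonoid.recOn with
  | one => simp [MonoidAlgebra.one_def]
  | of_mul x L ih =>
      rw [show FreeMonoid.toList (FreeMonoid.of x * L) = x :: FreeMonoid.toList L from rfl]
      rw [List.map_cons, List.prod_cons, map_mul, ih,
        show FreeAlgebra.equivMonoidAlgebraFreeMonoid (FreeAlgebra.ι K x) = MonoidAlgebra.single (FreeMonoid.of x) 1 by simp [FreeAlgebra.equivMonoidAlgebraFreeMonoid, MonoidAlgebra.of_apply],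
        MonoidAlgebra.single_mul_single, one_mul]

lemma aux_basis (L : FreeMonoid (Fin d)) :
    FreeAlgebra.basisFreeMonoid K (Fin d) L
      = ((FreeMonoid.toList L).map (FreeAlgebra.ι K)).prod := by
  have hB : FreeAlgebra.basisFreeMonoid K (Fin d) L
      = (FreeAlgebra.equivMonoidAlgebraFreeMonoid (R := K) (X := Fin d)).symm
          (MonoidAlgebra.single L 1) := rfl
  rw [hB, AlgEquiv.symm_apply_eq, aux_equiv]

lemma aux_span (P : ℕ → Prop) :
    Submodule.span K {w : FreeAlgebra K (Fin d) |
        ∃ L : List (Fin d), P L.length ∧ w = (L.map (FreeAlgebra.ι K)).prod}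
      = Submodule.span K (FreeAlgebra.basisFreeMonoid K (Fin d) ''
          {L : FreeMonoid (Fin d) | P (FreeMonoid.toList L).length}) := by
  congr 1
  ext w
  constructor
  · rintro ⟨L, hL, rfl⟩
    exact ⟨FreeMonoid.ofList L, hL, aux_basis K d _⟩
  · rintro ⟨L, hL, rfl⟩
    exact ⟨FreeMonoid.toList L, hL, aux_basis K d L⟩

lemma aux_disjoint (P Q : ℕ → Prop) (h : ∀ n, ¬ (P n ∧ Q n)) :
    Disjoint
      (Submodule.span K {w : FreeAlgebra K (Fin d) |
        ∃ L : List (Fin d), P L.length ∧ w = (L.map (FreeAlgebra.ι K)).prod})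
      (Submodule.span K {w : FreeAlgebra K (Fin d) |
        ∃ L : List (Fin d), Q L.length ∧ w = (L.map (FreeAlgebra.ι K)).prod}) := by
  rw [aux_span, aux_span]
  apply (FreeAlgebra.basisFreeMonoid K (Fin d)).linearIndependent.disjoint_span_image
  rw [Set.disjoint_left]
  intro L hP hQ
  exact h _ ⟨hP, hQ⟩

lemma aux_mul {p q : ℕ} {a b : FreeAlgebra K (Fin d)}
    (ha : a ∈ Submodule.span K {w : FreeAlgebra K (Fin d) |
        ∃ L : List (Fin d), L.length = p ∧ w = (L.map (FreeAlgebra.ι K)).prod})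
    (hb : b ∈ Submodule.span K {w : FreeAlgebra K (Fin d) |
        ∃ L : List (Fin d), L.length = q ∧ w = (L.map (FreeAlgebra.ι K)).prod}) :
    a * b ∈ Submodule.span K {w : FreeAlgebra K (Fin d) |
        ∃ L : List (Fin d), L.length = p + q ∧ w = (L.map (FreeAlgebra.ι K)).prod} := by
  have h1 := Submodule.mul_mem_mul ha hb
  rw [Submodule.span_mul_span] at h1
  refine Submodule.span_le.mpr ?_ h1
  rintro _ ⟨x, ⟨L1, h1', rfl⟩, y, ⟨L2, h2', rfl⟩, rfl⟩
  apply Submodule.subset_span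
  exact ⟨L1 ++ L2, by simp [h1', h2'], by simp⟩

lemma aux_prod (l : ℕ) (f : Fin l → FreeAlgebra K (Fin d)) (deg : Fin l → ℕ)
    (hfd : ∀ j, f j ∈ Submodule.span K {w : FreeAlgebra K (Fin d) |
        ∃ L : List (Fin d), L.length = deg j ∧ w = (L.map (FreeAlgebra.ι K)).prod})
    (L : List (Fin l)) :
    (L.map f).prod ∈ Submodule.span K {w : FreeAlgebra K (Fin d) |
        ∃ L' : List (Fin d), L'.length = (L.map deg).sum ∧
          w = (L'.map (FreeAlgebra.ι K)).prod} := by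
  induction L with
  | nil =>
      exact Submodule.subset_span ⟨[], rfl, by simp⟩
  | cons x L ih =>
      simp only [List.map_cons, List.prod_cons, List.sum_cons]
      exact aux_mul K d (hfd x) ih

end Aux

/-- If `g` has degree at most `m` and agrees modulo `I_m` with a linear combination
`Σ αᵢ uᵢ(f₁,…,f_l)` for homogeneous `f j`, then dropping the terms of degree `> m`
gives an exact representation: `g = Σ βᵢ uᵢ(f₁,…,f_l)`, where `βᵢ = αᵢ` when
`uᵢ(f₁,…,f_l)` is homogeneous of degree at most `m` and `βᵢ = 0` otherwise; in
particular `g` lies in the unital subalgebra generated by `f₁, …, f_l`. -/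
theorem stmt10 (K : Type*) [Field K] (d l m : ℕ)
    (f : Fin l → FreeAlgebra K (Fin d))
    (hf : ∀ j, ∃ k : ℕ, f j ∈ Submodule.span K
      {w : FreeAlgebra K (Fin d) |
        ∃ L : List (Fin d), L.length = k ∧ w = (L.map (FreeAlgebra.ι K)).prod})
    (g : FreeAlgebra K (Fin d))
    -- `m ≥ deg g`, i.e. `g` lies in the span of the words of length at most `m`
    (hg : g ∈ Submodule.span K
      {w : FreeAlgebra K (Fin d) |
        ∃ L : List (Fin d), L.length ≤ m ∧ w = (L.map (FreeAlgebra.ι K)).prod})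
    (N : ℕ) (u : Fin N → List (Fin l)) (α : Fin N → K)
    -- `g - Σᵢ αᵢ uᵢ(f₁,…,f_l) ∈ I_m`
    (hmod : g - ∑ i, α i • ((u i).map f).prod ∈ Submodule.span K
      {w : FreeAlgebra K (Fin d) |
        ∃ L : List (Fin d), m < L.length ∧ w = (L.map (FreeAlgebra.ι K)).prod})
    (β : Fin N → K)
    (hβ : ∀ i,
      ((∃ k ≤ m, ((u i).map f).prod ∈ Submodule.span K
          {w : FreeAlgebra K (Fin d) |
            ∃ L : List (Fin d), L.length = k ∧ w = (L.map (FreeAlgebra.ι K)).prod})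
          → β i = α i) ∧
      ((¬ ∃ k ≤ m, ((u i).map f).prod ∈ Submodule.span K
          {w : FreeAlgebra K (Fin d) |
            ∃ L : List (Fin d), L.length = k ∧ w = (L.map (FreeAlgebra.ι K)).prod})
          → β i = 0)) :
    g = ∑ i, β i • ((u i).map f).prod ∧ g ∈ Algebra.adjoin K (Set.range f) := by
  classical
  set W : ℕ → Submodule K (FreeAlgebra K (Fin d)) := fun k => Submodule.span K
      {w : FreeAlgebra K (Fin d) |
        ∃ L : List (Fin d), L.length = k ∧ w = (L.map (FreeAlgebra.ι K)).prod} with hW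
  set low : Submodule K (FreeAlgebra K (Fin d)) := Submodule.span K
      {w : FreeAlgebra K (Fin d) |
        ∃ L : List (Fin d), L.length ≤ m ∧ w = (L.map (FreeAlgebra.ι K)).prod} with hlowdef
  set high : Submodule K (FreeAlgebra K (Fin d)) := Submodule.span K
      {w : FreeAlgebra K (Fin d) |
        ∃ L : List (Fin d), m < L.length ∧ w = (L.map (FreeAlgebra.ι K)).prod} with hhighdef
  have hWlow : ∀ k ≤ m, W k ≤ low := fun k hk =>
    Submodule.span_mono (fun w ⟨L, hL, hw⟩ => ⟨L, hL ▸ hk, hw⟩)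
  have hWhigh : ∀ k, m < k → W k ≤ high := fun k hk =>
    Submodule.span_mono (fun w ⟨L, hL, hw⟩ => ⟨L, hL ▸ hk, hw⟩)
  have hdisj : Disjoint low high :=
    aux_disjoint K d (· ≤ m) (m < ·) (fun n hn => by omega)
  set deg : Fin l → ℕ := fun j => Classical.choose (hf j) with hdeg
  have hfd : ∀ j, f j ∈ W (deg j) := fun j => Classical.choose_spec (hf j)
  set p : Fin N → FreeAlgebra K (Fin d) := fun i => ((u i).map f).prod with hp
  set D : Fin N → ℕ := fun i => ((u i).map deg).sum with hD
  have hpD : ∀ i, p i ∈ W (D i) := fun i => aux_prod K d l f deg hfd (u i)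
  set S : Finset (Fin N) := Finset.univ.filter (fun i => D i ≤ m) with hS
  have key : g = ∑ i ∈ S, α i • p i := by
    have hlow : g - ∑ i ∈ S, α i • p i ∈ low :=
      sub_mem hg (Submodule.sum_mem _ fun i hi => Submodule.smul_mem _ _
        (hWlow (D i) (Finset.mem_filter.mp hi).2 (hpD i)))
    have hhigh : g - ∑ i ∈ S, α i • p i ∈ high := by
      have hsplit : g - ∑ i ∈ S, α i • p i
          = (g - ∑ i, α i • p i)
            + ∑ i ∈ Finset.univ.filter (fun i => ¬ D i ≤ m), α i • p i := by
        rw [← Finset.sum_filter_add_sum_filter_not Finset.univ (fun i => D i ≤ m)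
          (fun i => α i • p i)]
        abel
      rw [hsplit]
      exact add_mem hmod (Submodule.sum_mem _ fun i hi => Submodule.smul_mem _ _
        (hWhigh (D i) (by have := (Finset.mem_filter.mp hi).2; omega) (hpD i)))
    have h0 := Submodule.disjoint_def.mp hdisj _ hlow hhigh
    exact sub_eq_zero.mp h0
  have hsum : ∑ i ∈ S, α i • p i = ∑ i, β i • p i := by
    rw [← Finset.sum_filter_add_sum_filter_not Finset.univ (fun i => D i ≤ m)
      (fun i => β i • p i)]
    have h2 : ∑ i ∈ Finset.univ.filter (fun i => ¬ D i ≤ m), β i • p i = 0 := by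
      apply Finset.sum_eq_zero
      intro i hi
      have hDi : m < D i := by have := (Finset.mem_filter.mp hi).2; omega
      by_cases hex : ∃ k ≤ m, p i ∈ W k
      · obtain ⟨k, hk, hpk⟩ := hex
        have hz : p i = 0 := Submodule.disjoint_def.mp hdisj (p i)
          (hWlow k hk hpk) (hWhigh (D i) hDi (hpD i))
        rw [hz, smul_zero]
      · rw [(hβ i).2 hex, zero_smul]
    rw [h2, add_zero]
    apply Finset.sum_congr rfl
    intro i hi
    rw [(hβ i).1 ⟨D i, (Finset.mem_filter.mp hi).2, hpD i⟩]
  have hmain : g = ∑ i, β i • p i := key.trans hsum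
  refine ⟨hmain, hmain ▸ ?_⟩
  apply Subalgebra.sum_mem
  intro i _
  apply Subalgebra.smul_mem
  apply Subalgebra.list_prod_mem
  intro x hx
  obtain ⟨j, _, rfl⟩ := List.mem_map.mp hx
  exact Algebra.subset_adjoin ⟨j, rfl⟩
end
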